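/- Let (A,B,C,E) be the CCF of a minimal encoder G of an (n,k,δ) convolutional code C and (Â,B̂,Ĉ,Ê) the CCF of a minimal encoder Ĝ of the dual code Ĉ. Then the matrix P = Ĉ S_0^T − N A ∈ F^{δ×δ} is invertible, i.e. P ∈ GL_δ(F). -/

import Mathlib

open Polynomial Matrix
open scoped Classical

noncomputable section

namespace ConvCode

variable (F : Type) [Field F] [Fintype F]

/-- Hamming weight of a vector. -/
def wt {n : ℕ} (a : Fin n → F) : ℕ := (Finset.univ.filter fun j => a j ≠ 0).card

/-- Weight enumerator of a set of vectors in `F^n`, as a polynomial in `ℂ[W]`. -/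
def weSet {n : ℕ} (S : Set (Fin n → F)) : Polynomial ℂ :=
  ∑ a ∈ (Set.toFinite S).toFinset, (Polynomial.X : Polynomial ℂ) ^ wt F a

/-- The `i`-th row degree of a polynomial matrix. -/
def rowDeg {k n : ℕ} (G : Matrix (Fin k) (Fin n) (Polynomial F)) (i : Fin k) : ℕ :=
  Finset.univ.sup fun j => (G i j).natDegree

/-- `G` is basic: it has a polynomial right inverse. -/
def IsBasic {k n : ℕ} (G : Matrix (Fin k) (Fin n) (Polynomial F)) : Prop :=
  ∃ H : Matrix (Fin n) (Fin k) (Polynomial F), G * H = 1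

/-- The degree of the code: maximal degree of the `k × k` minors of `G`. -/
def codeDeg {k n : ℕ} (G : Matrix (Fin k) (Fin n) (Polynomial F)) : ℕ :=
  Finset.univ.sup fun f : Fin k ↪ Fin n => ((G.submatrix id f).det).natDegree

/-- A minimal (basic) encoder: the sum of the row degrees equals the degree of the code. -/
def IsMinimalEncoder {k n : ℕ} (G : Matrix (Fin k) (Fin n) (Polynomial F)) : Prop :=
  IsBasic F G ∧ ∑ i, rowDeg F G i = codeDeg F G

/-- The convolutional code generated by the encoder `G`. -/
def code {k n : ℕ} (G : Matrix (Fin k) (Fin n) (Polynomial F)) : Set (Fin n → Polynomial F) :=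
  Set.range fun u : Fin k → Polynomial F => u ᵥ* G

/-- The (module-theoretic) dual of a convolutional code. -/
def dualCode {n : ℕ} (𝓒 : Set (Fin n → Polynomial F)) : Set (Fin n → Polynomial F) :=
  {w | ∀ v ∈ 𝓒, w ⬝ᵥ v = 0}

/-- The sequence-space pairing `⟨⟨v,w⟩⟩ = ∑_t v_t w_tᵀ`. -/
def seqPair {n : ℕ} (v w : Fin n → Polynomial F) : F :=
  ∑ j, ∑ t ∈ Finset.range ((v j).natDegree + 1), (v j).coeff t * (w j).coeff t

/-- The sequence space dual of a convolutional code. -/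
def seqDual {n : ℕ} (𝓒 : Set (Fin n → Polynomial F)) : Set (Fin n → Polynomial F) :=
  {w | ∀ v ∈ 𝓒, ∀ l : ℕ, seqPair F v (fun j => Polynomial.X ^ l * w j) = 0}

/-- Index set of the state space of the controller canonical form:
a state index is a pair `(i, ν)` with `i` a row index and `ν < δ_i`. -/
abbrev StateIdx (k : ℕ) (d : Fin k → ℕ) : Type := (i : Fin k) × Fin (d i)

/-- The state-transition matrix `A` of the controller canonical form. -/
def ccfA {k : ℕ} (d : Fin k → ℕ) : Matrix (StateIdx k d) (StateIdx k d) F :=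
  Matrix.of fun s t => if s.1 = t.1 ∧ (s.2 : ℕ) + 1 = (t.2 : ℕ) then 1 else 0

/-- The input-to-state matrix `B` of the controller canonical form. -/
def ccfB {k : ℕ} (d : Fin k → ℕ) : Matrix (Fin k) (StateIdx k d) F :=
  Matrix.of fun i t => if t.1 = i ∧ (t.2 : ℕ) = 0 then 1 else 0

/-- The state-to-output matrix `C` of the controller canonical form. -/
def ccfC {k n : ℕ} (d : Fin k → ℕ) (G : Matrix (Fin k) (Fin n) (Polynomial F)) :
    Matrix (StateIdx k d) (Fin n) F :=
  Matrix.of fun s j => (G s.1 j).coeff ((s.2 : ℕ) + 1)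

/-- The matrix `E = G(0)` of the controller canonical form. -/
def ccfE {k n : ℕ} (G : Matrix (Fin k) (Fin n) (Polynomial F)) : Matrix (Fin k) (Fin n) F :=
  Matrix.of fun i j => (G i j).coeff 0

/-- The state index set of the controller canonical form of `G`. -/
abbrev States {k n : ℕ} (G : Matrix (Fin k) (Fin n) (Polynomial F)) : Type :=
  StateIdx k (rowDeg F G)

def matA {k n : ℕ} (G : Matrix (Fin k) (Fin n) (Polynomial F)) :
    Matrix (States F G) (States F G) F := ccfA F (rowDeg F G)

def matB {k n : ℕ} (G : Matrix (Fin k) (Fin n) (Polynomial F)) :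
    Matrix (Fin k) (States F G) F := ccfB F (rowDeg F G)

def matC {k n : ℕ} (G : Matrix (Fin k) (Fin n) (Polynomial F)) :
    Matrix (States F G) (Fin n) F := ccfC F (rowDeg F G) G

def matE {k n : ℕ} (G : Matrix (Fin k) (Fin n) (Polynomial F)) :
    Matrix (Fin k) (Fin n) F := ccfE F G

/-- The weight adjacency matrix of a state space realization `(A,B,C,E)`. -/
def WAM {σ : Type} [Fintype σ] {k n : ℕ} (A : Matrix σ σ F) (B : Matrix (Fin k) σ F)
    (C : Matrix σ (Fin n) F) (E : Matrix (Fin k) (Fin n) F) :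
    Matrix (σ → F) (σ → F) (Polynomial ℂ) :=
  Matrix.of fun X Y =>
    weSet F {v | ∃ u : Fin k → F, Y = X ᵥ* A + u ᵥ* B ∧ v = X ᵥ* C + u ᵥ* E}

/-- The weight adjacency matrix of an encoder `G` (via its controller canonical form). -/
def wam {k n : ℕ} (G : Matrix (Fin k) (Fin n) (Polynomial F)) :
    Matrix (States F G → F) (States F G → F) (Polynomial ℂ) :=
  WAM F (matA F G) (matB F G) (matC F G) (matE F G)

/-- The block code `C_const = 𝓒 ∩ F^n` of constant codewords. -/
def constSet {k n : ℕ} (G : Matrix (Fin k) (Fin n) (Polynomial F)) : Set (Fin n → F) :=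
  {w | (fun j => Polynomial.C (w j)) ∈ code F G}

/-- The block code `C_coeff` of coefficient vectors of codewords. -/
def coeffSet {k n : ℕ} (G : Matrix (Fin k) (Fin n) (Polynomial F)) : Set (Fin n → F) :=
  {w | ∃ v ∈ code F G, ∃ t : ℕ, ∀ j, (v j).coeff t = w j}

/-- The dual of a block code. -/
def blockDual {n : ℕ} (S : Set (Fin n → F)) : Set (Fin n → F) :=
  {w | ∀ v ∈ S, w ⬝ᵥ v = 0}

/-- `Δ`: the set of state pairs `(X,Y)` admitting a transition `Y = XA + uB`. -/
def Delta {k n : ℕ} (G : Matrix (Fin k) (Fin n) (Polynomial F)) :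
    Set ((States F G → F) × (States F G → F)) :=
  {p | ∃ u : Fin k → F, p.2 = p.1 ᵥ* matA F G + u ᵥ* matB F G}

/-- `Δ⁻ = {(0,Y) : Y ∈ im A}`. -/
def DeltaMinus {k n : ℕ} (G : Matrix (Fin k) (Fin n) (Polynomial F)) :
    Set ((States F G → F) × (States F G → F)) :=
  {p | p.1 = 0 ∧ ∃ X : States F G → F, p.2 = X ᵥ* matA F G}

/-- `Ω = {(X,Y) ∈ Δ : XC + Y Bᵀ E ∈ C_const}`. -/
def Omega {k n : ℕ} (G : Matrix (Fin k) (Fin n) (Polynomial F)) :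
    Set ((States F G → F) × (States F G → F)) :=
  {p | p ∈ Delta F G ∧
    p.1 ᵥ* matC F G + (p.2 ᵥ* (matB F G)ᵀ) ᵥ* matE F G ∈ constSet F G}

/-- Orthogonal of a set of state pairs with respect to the standard bilinear form on `F^{2δ}`. -/
def pairPerp {σ : Type} [Fintype σ] (S : Set ((σ → F) × (σ → F))) :
    Set ((σ → F) × (σ → F)) :=
  {p | ∀ s ∈ S, p.1 ⬝ᵥ s.1 + p.2 ⬝ᵥ s.2 = 0}

/-- `S_0 = Bᵀ E` and `S_i = Bᵀ B A^{i-1} C` for `i ≥ 1`. -/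
def Smat {k n : ℕ} (d : Fin k → ℕ) (G : Matrix (Fin k) (Fin n) (Polynomial F)) :
    ℕ → Matrix (StateIdx k d) (Fin n) F
  | 0 => (ccfB F d)ᵀ * ccfE F G
  | (i + 1) => (ccfB F d)ᵀ * ccfB F d * ccfA F d ^ i * ccfC F d G

def Sm {k n : ℕ} (G : Matrix (Fin k) (Fin n) (Polynomial F)) :
    ℕ → Matrix (States F G) (Fin n) F := Smat F (rowDeg F G) G

/-- The matrix `N = ∑_{m≥2} ∑_{i=1}^{m-1} ∑_{j=0}^{i-1} (Âᵀ)^{i-1} Ŝ_j S_{m-j}ᵀ A^{m-(i+1)}`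
(all summands with `m ≥ δ + δ̂` vanish, so the sum is truncated there). -/
def Nm {k kb n : ℕ} (G : Matrix (Fin k) (Fin n) (Polynomial F))
    (Gh : Matrix (Fin kb) (Fin n) (Polynomial F)) :
    Matrix (States F Gh) (States F G) F :=
  ∑ m ∈ Finset.Icc 2 (Fintype.card (States F G) + Fintype.card (States F Gh)),
    ∑ i ∈ Finset.Icc 1 (m - 1), ∑ j ∈ Finset.range i,
      (matA F Gh)ᵀ ^ (i - 1) * Sm F Gh j * (Sm F G (m - j))ᵀ * matA F G ^ (m - (i + 1))

/-- The reciprocal matrix `G' = diag(D^{δ_1},…,D^{δ_k}) · G(D⁻¹)`. -/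
def recip {k n : ℕ} (G : Matrix (Fin k) (Fin n) (Polynomial F)) :
    Matrix (Fin k) (Fin n) (Polynomial F) :=
  Matrix.of fun i j => (G i j).reflect (rowDeg F G i)

/-- The block diagonal matrix `R` whose blocks are the anti-identity matrices. -/
def Rmat {k : ℕ} (d : Fin k → ℕ) : Matrix (StateIdx k d) (StateIdx k d) F :=
  Matrix.of fun s t => if s.1 = t.1 ∧ (s.2 : ℕ) + (t.2 : ℕ) + 1 = d s.1 then 1 else 0

/-- The MacWilliams matrix `𝓗 = q^{-δ/2} (ζ^{τ(X Yᵀ)})_{X,Y}`. -/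
def macH (σ : Type) [Fintype σ] (p : ℕ) [Algebra (ZMod p) F] (ζ : ℂ) :
    Matrix (σ → F) (σ → F) ℂ :=
  Matrix.of fun X Y =>
    (((Real.sqrt (Fintype.card F) : ℝ) : ℂ))⁻¹ ^ Fintype.card σ *
      ζ ^ (Algebra.trace (ZMod p) F (X ⬝ᵥ Y)).val

/-- The MacWilliams transform `H(f)(W) = (1+(q-1)W)^n f((1-W)/(1+(q-1)W))`
on polynomials of degree at most `n`. -/
def macWT (q n : ℕ) (f : Polynomial ℂ) : Polynomial ℂ :=
  ∑ j ∈ Finset.range (n + 1),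
    Polynomial.C (f.coeff j) * (1 - Polynomial.X) ^ j *
      (1 + Polynomial.C ((q : ℂ) - 1) * Polynomial.X) ^ (n - j)

end ConvCode

/-!
Let `K` be the `δ̂ × δ` matrix whose `((î, ν̂), (i, ν))` entry is the coefficient of `D^ν` in
`⟨(D^{-(ν̂+1)} ĝ_î)₊, g_i⟩`, where `(·)₊` drops negative powers of `D`. Expanding the CCF
matrices, the entries of `Ĉ S₀ᵀ` and `N A` are partial antidiagonal sums of the coefficient
products of `ĝ_î` and `g_i`. Since `Ĝ Gᵀ = 0`, every full antidiagonal sum vanishes, which gives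
`P = K` and also `K = -K'ᵀ`, where `K'` is built with the roles of `G` and `Ĝ` exchanged. So `P`
is invertible once `x K = 0 → x = 0` holds for both pairs. For the exchanged pair this needs the
double dual `Ĉ^⊥ = C`, which uses that both encoders are basic and that `k + k̂ = n`.

Suppose `x K = 0`. The zero-input response `w` of the realization of `Ĝ` started in state `x` is
orthogonal to `C`: in degrees `ν < δ_i` this is `x K = 0`, and in degrees `ν ≥ δ_i` it follows
again from `Ĝ Gᵀ = 0`. Hence `w = u Ĝ`. If `c` is an input driving `Ĝ` from the zero state into
`x` at time `L`, then `c Ĝ` agrees with `D^L w` in degrees `≥ L`, so `(c − D^L u) Ĝ` has degree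
`< L`. By the predictable degree property of the minimal encoder `Ĝ`, each `c_î − D^L u_î` has
degree `< L − δ̂_î`. Its coefficients below `L − δ̂_î` vanish by the choice of `c`, so
`c = D^L u`, and comparing coefficients below `L` gives `x = 0`.
-/

namespace Polynomial

variable {R : Type*} [CommSemiring R]

theorem coeff_iterate_divX (p : R[X]) (m t : ℕ) : (divX^[m] p).coeff t = p.coeff (t + m) := by
  induction m generalizing p with
  | zero => rfl
  | succ m ih => rw [Function.iterate_succ_apply, ih, coeff_divX, add_assoc]

theorem iterate_divX_eq_zero {p : R[X]} {m : ℕ} (h : p.natDegree < m) : divX^[m] p = 0 :=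
  ext fun t => by rw [coeff_iterate_divX, coeff_zero, coeff_eq_zero_of_natDegree_lt (by omega)]

theorem coeff_iterate_divX_mul (p q : R[X]) (m b : ℕ) :
    (divX^[m] p * q).coeff b = ∑ t ∈ Finset.range (b + 1), p.coeff (m + t) * q.coeff (b - t) := by
  rw [coeff_mul, Finset.Nat.sum_antidiagonal_eq_sum_range_succ_mk]
  simp only [coeff_iterate_divX, add_comm]

theorem sum_range_coeff_mul_coeff (p q : R[X]) (a b : ℕ) :
    ∑ j ∈ Finset.range (a + 1), p.coeff j * q.coeff (a + b + 1 - j)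
      = (divX^[b + 1] q * p).coeff a := by
  rw [coeff_iterate_divX_mul, ← Finset.sum_range_reflect]
  refine Finset.sum_congr rfl fun t ht => ?_
  rw [Finset.mem_range] at ht
  rw [mul_comm]
  congr 2
  omega

theorem coeff_iterate_divX_mul_add (p q : R[X]) (a b : ℕ) :
    (divX^[a + 1] p * q).coeff b + (divX^[b + 1] q * p).coeff a = (p * q).coeff (a + b + 1) := by
  rw [← sum_range_coeff_mul_coeff p q a b, coeff_iterate_divX_mul, coeff_mul p q,
    Finset.Nat.sum_antidiagonal_eq_sum_range_succ_mk,
    show (a + b + 1).succ = (a + 1) + (b + 1) by omega, Finset.sum_range_add _ (a + 1), add_comm]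
  congr 1
  refine Finset.sum_congr rfl fun t ht => ?_
  rw [Finset.mem_range] at ht
  congr 2
  omega

theorem coeff_prod_sum_of_natDegree_le {ι : Type*} (s : Finset ι) (f : ι → R[X]) (d : ι → ℕ)
    (h : ∀ i ∈ s, (f i).natDegree ≤ d i) :
    (∏ i ∈ s, f i).coeff (∑ i ∈ s, d i) = ∏ i ∈ s, (f i).coeff (d i) := by
  induction s using Finset.cons_induction with
  | empty => simp
  | cons a s ha ih =>
    have hs : ∀ i ∈ s, (f i).natDegree ≤ d i := fun i hi => h i (Finset.mem_cons_of_mem hi)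
    rw [Finset.prod_cons, Finset.sum_cons, Finset.prod_cons, ← ih hs]
    exact coeff_mul_add_eq_of_natDegree_le (h a (Finset.mem_cons_self a s))
      ((natDegree_prod_le s f).trans (Finset.sum_le_sum hs))

end Polynomial

namespace Matrix

theorem dotProduct_eq_zero_of_mul_transpose_eq_zero {R l m o : Type*} [CommSemiring R]
    [Fintype m] {A : Matrix l m R} {B : Matrix o m R} (h : A * Bᵀ = 0) (i : l) (j : o) :
    A i ⬝ᵥ B j = 0 :=
  congrFun (congrFun h i) j

theorem mul_transpose_eq_zero_comm {R l m o : Type*} [CommSemiring R] [Fintype m]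
    {A : Matrix l m R} {B : Matrix o m R} (h : A * Bᵀ = 0) : B * Aᵀ = 0 := by
  rw [← transpose_transpose (B * Aᵀ), transpose_mul, transpose_transpose, h, transpose_zero]

theorem coeff_det_of_natDegree_le {R ι : Type*} [CommRing R] [Fintype ι] [DecidableEq ι]
    (Q : Matrix ι ι R[X]) (d : ι → ℕ) (h : ∀ i j, (Q i j).natDegree ≤ d i) :
    Q.det.coeff (∑ i, d i) = (of fun i j => (Q i j).coeff (d i)).det := by
  rw [det_apply, det_apply, finsetSum_coeff]
  refine Finset.sum_congr rfl fun σ _ => ?_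
  rw [coeff_smul, ← Equiv.sum_comp σ d,
    coeff_prod_sum_of_natDegree_le _ _ _ fun i _ => h (σ i) i]
  rfl

theorem exists_mul_eq_one_and_mul_eq_one {K m n : Type*} [Field K] [Fintype m] [Fintype n]
    [DecidableEq m] [DecidableEq n] (P : Matrix m n K)
    (hleft : ∀ x, x ᵥ* P = 0 → x = 0) (hright : ∀ y, P *ᵥ y = 0 → y = 0) :
    ∃ Q : Matrix n m K, P * Q = 1 ∧ Q * P = 1 := by
  have hinjL : Function.Injective P.vecMulLinear :=
    LinearMap.ker_eq_bot.mp (LinearMap.ker_eq_bot'.mpr hleft)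
  have hinjR : Function.Injective P.mulVecLin :=
    LinearMap.ker_eq_bot.mp (LinearMap.ker_eq_bot'.mpr hright)
  have hcard : Fintype.card n = Fintype.card m := by
    have h1 := LinearMap.finrank_le_finrank_of_injective hinjL
    have h2 := LinearMap.finrank_le_finrank_of_injective hinjR
    simp only [Module.finrank_fintype_fun_eq_card] at h1 h2
    omega
  have hsurj : Function.Surjective P.mulVec :=
    (LinearMap.injective_iff_surjective_of_finrank_eq_finrank (f := P.mulVecLin)
      (by simp only [Module.finrank_fintype_fun_eq_card, hcard])).mp hinjR
  obtain ⟨Q, hPQ⟩ := mulVec_surjective_iff_exists_right_inverse.mp hsurj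
  exact ⟨Q, hPQ, (mul_eq_one_comm_of_card_eq m n K hcard.symm).mp hPQ⟩

theorem exists_vecMul_eq_of_mulVec_eq_zero {R m mh n : Type*} [CommRing R] [Fintype m]
    [Fintype mh] [Fintype n] [DecidableEq m] [DecidableEq mh] [DecidableEq n]
    (e : m ⊕ mh ≃ n) {G : Matrix m n R} {Gh : Matrix mh n R} {H : Matrix n m R}
    {Hh : Matrix n mh R} (hH : G * H = 1) (hHh : Gh * Hh = 1) (horth : Gh * Gᵀ = 0)
    {w : n → R} (hw : Gh *ᵥ w = 0) : ∃ u, u ᵥ* G = w := by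
  have hGGh : G * Ghᵀ = 0 := mul_transpose_eq_zero_comm horth
  -- `[G; Ĥᵀ (1 - H G)]` is a left inverse of the square matrix `[H | Ĝᵀ]`, hence a right inverse.
  have hLM : fromRows G (Hhᵀ * (1 - H * G)) * fromCols H Ghᵀ = 1 := by
    rw [fromRows_mul_fromCols, hH, hGGh, Matrix.mul_assoc, Matrix.sub_mul, Matrix.one_mul,
      Matrix.mul_assoc, hH, Matrix.mul_one, sub_self, Matrix.mul_zero, Matrix.mul_assoc,
      Matrix.sub_mul, Matrix.mul_assoc, hGGh, Matrix.mul_zero, sub_zero, Matrix.one_mul,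
      ← transpose_mul, hHh, transpose_one, fromBlocks_one]
  have hML := (mul_eq_one_comm_of_equiv e).mp hLM
  rw [fromCols_mul_fromRows] at hML
  refine ⟨w ᵥ* H, ?_⟩
  have hwGh : w ᵥ* Ghᵀ = 0 := by rw [vecMul_transpose, hw]
  calc (w ᵥ* H) ᵥ* G = w ᵥ* (H * G + Ghᵀ * (Hhᵀ * (1 - H * G))) := by
        rw [vecMul_add, ← vecMul_vecMul, ← vecMul_vecMul, hwGh, zero_vecMul, add_zero]
    _ = w := by rw [hML, vecMul_one]

end Matrix

namespace ConvCode

section TailPairing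

variable {R ι : Type*} [CommSemiring R] [Fintype ι]

/-- The coefficient of `D^b` in `⟨(D^{-(a+1)} v)₊, w⟩`, where `(·)₊` drops negative powers. -/
def tailPairing (v w : ι → R[X]) (a b : ℕ) : R :=
  ((fun c => divX^[a + 1] (v c)) ⬝ᵥ w).coeff b

theorem tailPairing_add_tailPairing (v w : ι → R[X]) (a b : ℕ) :
    tailPairing v w a b + tailPairing w v b a = (v ⬝ᵥ w).coeff (a + b + 1) := by
  simp only [tailPairing, dotProduct, finsetSum_coeff, ← Finset.sum_add_distrib,
    coeff_iterate_divX_mul_add]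

theorem tailPairing_eq_zero {v : ι → R[X]} {a : ℕ} (h : ∀ c, (v c).natDegree ≤ a)
    (w : ι → R[X]) (b : ℕ) : tailPairing v w a b = 0 := by
  rw [tailPairing, show (fun c => divX^[a + 1] (v c)) = 0 from
    funext fun c => iterate_divX_eq_zero (Nat.lt_succ_of_le (h c)), zero_dotProduct, coeff_zero]

theorem tailPairing_zero_right (v w : ι → R[X]) (a : ℕ) :
    tailPairing v w a 0 = ∑ c, (v c).coeff (a + 1) * (w c).coeff 0 := by
  simp only [tailPairing, dotProduct, finsetSum_coeff, mul_coeff_zero, coeff_iterate_divX,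
    zero_add]

theorem sum_range_sum_coeff_mul_coeff (v w : ι → R[X]) (a b : ℕ) :
    ∑ j ∈ Finset.range (a + 1), ∑ c, (v c).coeff j * (w c).coeff (a + b + 1 - j)
      = tailPairing w v b a := by
  simp only [tailPairing, dotProduct, finsetSum_coeff, ← sum_range_coeff_mul_coeff]
  exact Finset.sum_comm

theorem tailPairing_eq_neg {R : Type*} [CommRing R] {v w : ι → R[X]} (h : v ⬝ᵥ w = 0)
    (a b : ℕ) : tailPairing v w a b = -tailPairing w v b a :=
  eq_neg_of_add_eq_zero_left (by rw [tailPairing_add_tailPairing, h, coeff_zero])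

end TailPairing

theorem sum_Icc_sum_Icc_sum_range_ite {M : Type*} [AddCommMonoid M] (f : ℕ → ℕ → M)
    {a b N : ℕ} (hN : a + b + 1 ≤ N) :
    ∑ m ∈ Finset.Icc 2 N, ∑ i ∈ Finset.Icc 1 (m - 1), ∑ j ∈ Finset.range i,
        (if a = i - 1 ∧ b = m - (i + 1) + 1 then f m j else 0)
      = if b = 0 then 0 else ∑ j ∈ Finset.range (a + 1), f (a + b + 1) j := by
  split_ifs with hb
  · exact Finset.sum_eq_zero fun m _ => Finset.sum_eq_zero fun i _ =>
      Finset.sum_eq_zero fun j _ => if_neg (by omega)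
  have hvanish : ∀ m i : ℕ, i ∈ Finset.Icc 1 (m - 1) → (m ≠ a + b + 1 ∨ i ≠ a + 1) →
      ∑ j ∈ Finset.range i, (if a = i - 1 ∧ b = m - (i + 1) + 1 then f m j else 0) = 0 :=
    fun m i hi hne => Finset.sum_eq_zero fun j _ => if_neg (by rw [Finset.mem_Icc] at hi; omega)
  rw [Finset.sum_eq_single (a + b + 1), Finset.sum_eq_single (a + 1)]
  · exact Finset.sum_congr rfl fun j _ => if_pos ⟨by omega, by omega⟩
  · exact fun i hi hne => hvanish _ i hi (Or.inr hne)
  · exact fun h => absurd (Finset.mem_Icc.mpr ⟨by omega, by omega⟩) h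
  · exact fun m _ hne => Finset.sum_eq_zero fun i hi => hvanish m i hi (Or.inl hne)
  · exact fun h => absurd (Finset.mem_Icc.mpr ⟨by omega, hN⟩) h

variable {F : Type} [Field F]

section StateIdx

variable {k : ℕ} {d : Fin k → ℕ}

theorem stateIdx_eq_iff {s t : StateIdx k d} : s = t ↔ s.1 = t.1 ∧ (s.2 : ℕ) = t.2 :=
  Sigma.ext_iff.trans (and_congr_right fun h => Fin.heq_ext_iff (congrArg d h))

theorem snd_lt_card_stateIdx (s : StateIdx k d) : (s.2 : ℕ) < Fintype.card (StateIdx k d) := by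
  rw [Fintype.card_sigma]
  simp only [Fintype.card_fin]
  exact s.2.isLt.trans_le (Finset.single_le_sum (fun i _ => Nat.zero_le (d i)) (Finset.mem_univ _))

theorem sum_ite_stateIdx {M : Type*} [AddCommMonoid M] (i : Fin k) (ν : ℕ)
    (f : StateIdx k d → M) :
    ∑ u : StateIdx k d, (if u.1 = i ∧ (u.2 : ℕ) = ν then f u else 0)
      = if h : ν < d i then f ⟨i, ν, h⟩ else 0 := by
  split_ifs with h
  · rw [Fintype.sum_eq_single ⟨i, ν, h⟩ fun u hu => if_neg fun hu' => hu (stateIdx_eq_iff.mpr hu'),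
      if_pos ⟨rfl, rfl⟩]
  · refine Finset.sum_eq_zero fun u _ => if_neg ?_
    rintro ⟨rfl, rfl⟩
    exact h u.2.isLt

theorem ccfA_apply (s t : StateIdx k d) :
    ccfA F d s t = if t.1 = s.1 ∧ (t.2 : ℕ) = s.2 + 1 then 1 else 0 := by
  simp only [ccfA, of_apply, @eq_comm _ s.1, @eq_comm _ ((s.2 : ℕ) + 1)]

theorem ccfA_pow_apply (p : ℕ) (s t : StateIdx k d) :
    (ccfA F d ^ p) s t = if t.1 = s.1 ∧ (t.2 : ℕ) = s.2 + p then 1 else 0 := by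
  induction p generalizing s with
  | zero => simp only [pow_zero, one_apply, add_zero, @eq_comm _ s, stateIdx_eq_iff]
  | succ p ih =>
    rw [pow_succ', mul_apply, show (s.2 : ℕ) + (p + 1) = s.2 + 1 + p by ring]
    simp only [ccfA_apply, ite_mul, one_mul, zero_mul, sum_ite_stateIdx, ih]
    by_cases h : (s.2 : ℕ) + 1 < d s.1
    · rw [dif_pos h]
    · rw [dif_neg h, if_neg]
      rintro ⟨h₁, h₂⟩
      have := t.2.isLt.trans_eq (congrArg d h₁)
      omega

theorem ccfB_mul_ccfA_pow_apply (p : ℕ) (i : Fin k) (t : StateIdx k d) :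
    (ccfB F d * ccfA F d ^ p) i t = if t.1 = i ∧ (t.2 : ℕ) = p then 1 else 0 := by
  simp only [mul_apply, ccfB, of_apply, ite_mul, one_mul, zero_mul, sum_ite_stateIdx,
    ccfA_pow_apply, zero_add]
  by_cases h : 0 < d i
  · rw [dif_pos h]
  · rw [dif_neg h, if_neg]
    rintro ⟨h₁, -⟩
    exact h (Nat.zero_lt_of_lt (t.2.isLt.trans_eq (congrArg d h₁)))

theorem ccfB_mul_ccfA_pow_transpose_mul_mul_apply {kh : ℕ} {dh : Fin kh → ℕ}
    (M : Matrix (Fin kh) (Fin k) F) (p r : ℕ) (sh : StateIdx kh dh) (s : StateIdx k d) :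
    ((ccfB F dh * ccfA F dh ^ p)ᵀ * M * (ccfB F d * ccfA F d ^ r)) sh s
      = if (sh.2 : ℕ) = p ∧ (s.2 : ℕ) = r then M sh.1 s.1 else 0 := by
  simp only [mul_apply (N := ccfB F d * ccfA F d ^ r),
    mul_apply (M := (ccfB F dh * ccfA F dh ^ p)ᵀ), transpose_apply, ccfB_mul_ccfA_pow_apply,
    ite_and, ite_mul, one_mul, zero_mul, mul_ite, mul_one, mul_zero, Finset.sum_ite_eq,
    Finset.mem_univ, if_true]
  by_cases (sh.2 : ℕ) = p <;> by_cases (s.2 : ℕ) = r <;> simp only [*, if_true, if_false]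

end StateIdx

variable {k kb n : ℕ}

theorem natDegree_le_rowDeg (G : Matrix (Fin k) (Fin n) F[X]) (i : Fin k) (c : Fin n) :
    (G i c).natDegree ≤ rowDeg F G i :=
  Finset.le_sup (f := fun j => (G i j).natDegree) (Finset.mem_univ c)

theorem ccfB_mul_ccfA_pow_mul_ccfC (G : Matrix (Fin k) (Fin n) F[X]) (p : ℕ) :
    ccfB F (rowDeg F G) * ccfA F (rowDeg F G) ^ p * ccfC F (rowDeg F G) G
      = G.map (·.coeff (p + 1)) := by
  ext i c
  rw [mul_apply]
  simp only [ccfB_mul_ccfA_pow_apply, ite_mul, one_mul, zero_mul, sum_ite_stateIdx, ccfC, of_apply,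
    map_apply]
  split_ifs with h
  · rfl
  · exact (coeff_eq_zero_of_natDegree_lt ((natDegree_le_rowDeg G i c).trans_lt (by omega))).symm

theorem Sm_eq (G : Matrix (Fin k) (Fin n) F[X]) (m : ℕ) :
    Sm F G m = (matB F G)ᵀ * G.map (·.coeff m) := by
  cases m with
  | zero => rfl
  | succ m =>
    rw [Sm, Smat, Matrix.mul_assoc, Matrix.mul_assoc, ← Matrix.mul_assoc (ccfB F _),
      ccfB_mul_ccfA_pow_mul_ccfC]
    rfl

theorem Nm_summand_apply (G : Matrix (Fin k) (Fin n) F[X]) (Gh : Matrix (Fin kb) (Fin n) F[X])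
    (p j l r : ℕ) (sh : States F Gh) (s : States F G) :
    ((matA F Gh)ᵀ ^ p * Sm F Gh j * (Sm F G l)ᵀ * matA F G ^ r) sh s
      = if (sh.2 : ℕ) = p ∧ (s.2 : ℕ) = r then ∑ c, (Gh sh.1 c).coeff j * (G s.1 c).coeff l
        else 0 := by
  rw [Sm_eq, Sm_eq, show (matA F Gh)ᵀ ^ p * ((matB F Gh)ᵀ * Gh.map (·.coeff j))
      * ((matB F G)ᵀ * G.map (·.coeff l))ᵀ * matA F G ^ r
      = (matB F Gh * matA F Gh ^ p)ᵀ * (Gh.map (·.coeff j) * (G.map (·.coeff l))ᵀ)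
        * (matB F G * matA F G ^ r) by
    simp only [transpose_mul, transpose_transpose, transpose_pow, Matrix.mul_assoc]]
  exact ccfB_mul_ccfA_pow_transpose_mul_mul_apply _ p r sh s

theorem matC_mul_Sm_zero_transpose_apply (G : Matrix (Fin k) (Fin n) F[X])
    (Gh : Matrix (Fin kb) (Fin n) F[X]) (sh : States F Gh) (s : States F G) :
    (matC F Gh * (Sm F G 0)ᵀ) sh s
      = if (s.2 : ℕ) = 0 then tailPairing (Gh sh.1) (G s.1) sh.2 0 else 0 := by
  rw [Sm_eq, transpose_mul, transpose_transpose, ← Matrix.mul_assoc, mul_apply]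
  simp only [matB, ccfB, of_apply, mul_ite, mul_one, mul_zero, ite_and, Finset.sum_ite_eq,
    Finset.mem_univ, if_true, tailPairing_zero_right]
  rfl

theorem Nm_mul_matA_apply (G : Matrix (Fin k) (Fin n) F[X]) (Gh : Matrix (Fin kb) (Fin n) F[X])
    (sh : States F Gh) (s : States F G) :
    (Nm F G Gh * matA F G) sh s
      = if (s.2 : ℕ) = 0 then 0 else tailPairing (G s.1) (Gh sh.1) s.2 sh.2 := by
  have hN : (sh.2 : ℕ) + s.2 + 1 ≤ Fintype.card (States F G) + Fintype.card (States F Gh) := by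
    have h₁ : (s.2 : ℕ) < Fintype.card (States F G) := snd_lt_card_stateIdx s
    have h₂ : (sh.2 : ℕ) < Fintype.card (States F Gh) := snd_lt_card_stateIdx sh
    omega
  simp only [Nm, Matrix.sum_mul, Matrix.sum_apply, Matrix.mul_assoc _ (matA F G ^ _), ← pow_succ,
    Nm_summand_apply, sum_Icc_sum_Icc_sum_range_ite _ hN, sum_range_sum_coeff_mul_coeff]

def tailMat (G : Matrix (Fin k) (Fin n) F[X]) (Gh : Matrix (Fin kb) (Fin n) F[X]) :
    Matrix (States F Gh) (States F G) F :=
  of fun sh s => tailPairing (Gh sh.1) (G s.1) sh.2 s.2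

variable {G : Matrix (Fin k) (Fin n) F[X]} {Gh : Matrix (Fin kb) (Fin n) F[X]}

theorem matC_mul_Sm_zero_transpose_sub_Nm_mul_matA (horth : Gh * Gᵀ = 0) :
    matC F Gh * (Sm F G 0)ᵀ - Nm F G Gh * matA F G = tailMat G Gh := by
  ext sh s
  rw [Matrix.sub_apply, matC_mul_Sm_zero_transpose_apply, Nm_mul_matA_apply, tailMat, of_apply]
  split_ifs with h
  · rw [sub_zero, h]
  · rw [zero_sub, tailPairing_eq_neg (dotProduct_eq_zero_of_mul_transpose_eq_zero horth _ _)]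

theorem tailMat_eq_neg_transpose (horth : Gh * Gᵀ = 0) :
    tailMat G Gh = -(tailMat Gh G)ᵀ := by
  ext sh s
  exact tailPairing_eq_neg (dotProduct_eq_zero_of_mul_transpose_eq_zero horth _ _) _ _

theorem row_mem_code (i : Fin k) : G i ∈ code F G :=
  ⟨Pi.single i 1, single_one_vecMul i G⟩

theorem mul_transpose_eq_zero_of_code_eq_dualCode (hdual : code F Gh = dualCode F (code F G)) :
    Gh * Gᵀ = 0 := by
  ext ih i : 1
  have hrow : Gh ih ∈ dualCode F (code F G) := hdual ▸ row_mem_code ih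
  exact hrow (G i) (row_mem_code i)

theorem mem_code_of_mulVec_eq_zero (hdual : code F Gh = dualCode F (code F G))
    {w : Fin n → F[X]} (hw : G *ᵥ w = 0) : w ∈ code F Gh := by
  rw [hdual]
  rintro _ ⟨u, rfl⟩
  rw [dotProduct_comm, ← dotProduct_mulVec, hw, dotProduct_zero]

theorem mem_code_of_mulVec_eq_zero_of_isBasic (hkn : k + kb = n) (hG : IsBasic F G)
    (hGh : IsBasic F Gh) (horth : Gh * Gᵀ = 0) {w : Fin n → F[X]} (hw : Gh *ᵥ w = 0) :
    w ∈ code F G := by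
  obtain ⟨H, hH⟩ := hG
  obtain ⟨Hh, hHh⟩ := hGh
  exact exists_vecMul_eq_of_mulVec_eq_zero (finSumFinEquiv.trans (finCongr hkn)) hH hHh horth hw

/-- The leading row coefficient matrix `[G]_hr`. -/
def leadRowCoeff (G : Matrix (Fin k) (Fin n) F[X]) : Matrix (Fin k) (Fin n) F :=
  of fun i c => (G i c).coeff (rowDeg F G i)

namespace IsMinimalEncoder

theorem eq_zero_of_vecMul_leadRowCoeff_eq_zero (hG : IsMinimalEncoder F G) {a : Fin k → F}
    (ha : a ᵥ* leadRowCoeff G = 0) : a = 0 := by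
  obtain ⟨⟨H, hH⟩, hdeg⟩ := hG
  by_cases hconst : ∀ i, rowDeg F G i = 0
  · have hGH : G.map constantCoeff * H.map constantCoeff = 1 := by
      rw [← Matrix.map_mul, hH, Matrix.map_one _ (map_zero _) (map_one _)]
    have hlead : G.map constantCoeff = leadRowCoeff G := by
      ext i c
      simp [leadRowCoeff, hconst i, coeff_zero_eq_eval_zero]
    rw [← vecMul_one a, ← hGH, ← vecMul_vecMul, hlead, ha, zero_vecMul]
  push Not at hconst
  obtain ⟨i, hi⟩ := hconst
  have hpos : 0 < codeDeg F G := hdeg ▸ Finset.sum_pos' (fun _ _ => Nat.zero_le _)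
    ⟨i, Finset.mem_univ i, Nat.pos_of_ne_zero hi⟩
  obtain ⟨f, -, hf⟩ := Finset.exists_mem_eq_sup Finset.univ
    (Finset.univ_nonempty_iff.mpr (by
      by_contra h
      rw [not_nonempty_iff] at h
      simp [codeDeg, Finset.univ_eq_empty] at hpos))
    fun f : Fin k ↪ Fin n => ((G.submatrix id f).det).natDegree
  have hdet : ((G.submatrix id f).det).natDegree = ∑ i, rowDeg F G i := by
    rw [hdeg, codeDeg, hf]
  have hdet0 : (G.submatrix id f).det ≠ 0 := by
    rintro h0
    rw [h0, natDegree_zero] at hdet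
    rw [← hdeg, ← hdet] at hpos
    exact hpos.false
  by_contra ha0
  refine leadingCoeff_ne_zero.mpr hdet0 ?_
  rw [leadingCoeff, hdet, coeff_det_of_natDegree_le (G.submatrix id f) (rowDeg F G)
    fun i j => natDegree_le_rowDeg G i (f j)]
  exact exists_vecMul_eq_zero_iff.mp ⟨a, ha0, funext fun j => congrFun ha (f j)⟩

/-- The predictable degree property. -/
theorem natDegree_add_rowDeg_lt (hG : IsMinimalEncoder F G) {b : Fin k → F[X]} {L : ℕ}
    (hb : ∀ c m, L ≤ m → ((b ᵥ* G) c).coeff m = 0) {i : Fin k} (hbi : b i ≠ 0) :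
    (b i).natDegree + rowDeg F G i < L := by
  by_contra! hL
  have hmem : ∀ {j}, b j ≠ 0 → j ∈ Finset.univ.filter (b · ≠ 0) := fun h => by simpa using h
  obtain ⟨i₀, hi₀, hmax⟩ := Finset.exists_max_image (Finset.univ.filter (b · ≠ 0))
    (fun j => (b j).natDegree + rowDeg F G j) ⟨i, hmem hbi⟩
  set θ := (b i₀).natDegree + rowDeg F G i₀
  have hθ : L ≤ θ := hL.trans (hmax i (hmem hbi))
  set a : Fin k → F := fun j => if (b j).natDegree + rowDeg F G j = θ then (b j).leadingCoeff else 0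
  have hcoeff : ∀ j c, (b j * G j c).coeff θ = a j * leadRowCoeff G j c := by
    intro j c
    by_cases hj : (b j).natDegree + rowDeg F G j = θ
    · rw [← hj, coeff_mul_add_eq_of_natDegree_le le_rfl (natDegree_le_rowDeg G j c)]
      simp only [a, hj, if_true, leadingCoeff, leadRowCoeff, of_apply]
    · rw [show a j = 0 from if_neg hj, zero_mul]
      rcases eq_or_ne (b j) 0 with h0 | h0
      · rw [h0, zero_mul, coeff_zero]
      refine coeff_eq_zero_of_natDegree_lt (natDegree_mul_le.trans_lt ?_)
      have := natDegree_le_rowDeg G j c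
      have := hmax j (hmem h0)
      omega
  have ha : a ᵥ* leadRowCoeff G = 0 := funext fun c => by
    rw [Pi.zero_apply, ← hb c θ hθ]
    simp only [vecMul, dotProduct, finsetSum_coeff, hcoeff]
  have := congrFun (hG.eq_zero_of_vecMul_leadRowCoeff_eq_zero ha) i₀
  rw [Pi.zero_apply, show a i₀ = (b i₀).leadingCoeff from if_pos rfl, leadingCoeff_eq_zero] at this
  exact (Finset.mem_filter.mp hi₀).2 this

end IsMinimalEncoder

/-- The zero-input response of the realization of `Gh` started in the state `x`. -/
def stateTail (Gh : Matrix (Fin kb) (Fin n) F[X]) (x : States F Gh → F) : Fin n → F[X] :=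
  ∑ sh, x sh • fun c => divX^[sh.2 + 1] (Gh sh.1 c)

/-- An input driving the realization of `Gh` from the zero state into the state `x` at time `L`. -/
def statePoly (Gh : Matrix (Fin kb) (Fin n) F[X]) (x : States F Gh → F) (L : ℕ) :
    Fin kb → F[X] :=
  fun ih => ∑ v : Fin (rowDeg F Gh ih), monomial (L - 1 - v) (x ⟨ih, v⟩)

theorem coeff_stateTail_dotProduct (x : States F Gh → F) (w : Fin n → F[X]) (b : ℕ) :
    (stateTail Gh x ⬝ᵥ w).coeff b = ∑ sh, x sh * tailPairing (Gh sh.1) w sh.2 b := by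
  simp only [stateTail, sum_dotProduct, smul_dotProduct, finsetSum_coeff, coeff_smul, smul_eq_mul,
    tailPairing]

theorem stateTail_dotProduct_eq_zero (horth : Gh * Gᵀ = 0) {x : States F Gh → F}
    (hx : x ᵥ* tailMat G Gh = 0) (i : Fin k) : stateTail Gh x ⬝ᵥ G i = 0 := by
  ext ν
  rw [coeff_stateTail_dotProduct, coeff_zero]
  by_cases hν : ν < rowDeg F G i
  · exact congrFun hx ⟨i, ν, hν⟩
  · refine Finset.sum_eq_zero fun sh _ => ?_
    rw [tailPairing_eq_neg (dotProduct_eq_zero_of_mul_transpose_eq_zero horth _ _),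
      tailPairing_eq_zero (fun c => (natDegree_le_rowDeg G i c).trans (not_lt.mp hν)), neg_zero,
      mul_zero]

theorem coeff_statePoly_of_lt (x : States F Gh → F) {L j : ℕ} (ih : Fin kb)
    (hj : j < L - rowDeg F Gh ih) : (statePoly Gh x L ih).coeff j = 0 :=
  (finsetSum_coeff _ _ _).trans <| Finset.sum_eq_zero fun v _ => by
    rw [coeff_monomial, if_neg]
    have := v.isLt
    omega

theorem coeff_statePoly_sub_one_sub (x : States F Gh → F) {L : ℕ} {ih : Fin kb}
    (hL : rowDeg F Gh ih ≤ L) (v : Fin (rowDeg F Gh ih)) :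
    (statePoly Gh x L ih).coeff (L - 1 - v) = x ⟨ih, v⟩ := by
  rw [statePoly, finsetSum_coeff, Fintype.sum_eq_single v, coeff_monomial, if_pos rfl]
  intro v' hv'
  rw [coeff_monomial, if_neg]
  intro h
  have := v.isLt
  have := v'.isLt
  exact hv' (Fin.ext (by omega))

theorem coeff_statePoly_vecMul (x : States F Gh → F) {L : ℕ} (hL : ∀ ih, rowDeg F Gh ih ≤ L)
    (c : Fin n) (t : ℕ) :
    ((statePoly Gh x L ᵥ* Gh) c).coeff (L + t) = (stateTail Gh x c).coeff t := by
  simp only [vecMul, dotProduct, statePoly, stateTail, Finset.sum_mul, finsetSum_coeff,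
    Finset.sum_apply, Pi.smul_apply, coeff_smul, smul_eq_mul, coeff_iterate_divX, Fintype.sum_sigma]
  refine Finset.sum_congr rfl fun ih _ => Finset.sum_congr rfl fun v _ => ?_
  have := v.isLt
  have := hL ih
  rw [show L + t = t + (v + 1) + (L - 1 - v) by omega, coeff_monomial_mul]

theorem eq_zero_of_vecMul_tailMat_eq_zero (hGh : IsMinimalEncoder F Gh) (horth : Gh * Gᵀ = 0)
    (hmem : ∀ w, G *ᵥ w = 0 → w ∈ code F Gh) {x : States F Gh → F}
    (hx : x ᵥ* tailMat G Gh = 0) : x = 0 := by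
  set L := Finset.univ.sup (rowDeg F Gh)
  have hL : ∀ ih, rowDeg F Gh ih ≤ L := fun ih => Finset.le_sup (Finset.mem_univ ih)
  obtain ⟨u, hu⟩ : ∃ u, u ᵥ* Gh = stateTail Gh x := hmem _ <| funext fun i => by
    rw [mulVec, dotProduct_comm]
    exact stateTail_dotProduct_eq_zero horth hx i
  set b : Fin kb → F[X] := statePoly Gh x L - (X ^ L : F[X]) • u with hb_def
  have hb_high : ∀ c m, L ≤ m → ((b ᵥ* Gh) c).coeff m = 0 := by
    intro c m hm
    obtain ⟨t, rfl⟩ := Nat.exists_eq_add_of_le hm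
    rw [hb_def, sub_vecMul, smul_vecMul, hu, Pi.sub_apply, Pi.smul_apply, smul_eq_mul, coeff_sub,
      coeff_statePoly_vecMul x hL, add_comm L, coeff_X_pow_mul, sub_self]
  have hb : b = 0 := by
    funext ih
    by_contra! hbi
    have hlow : L - rowDeg F Gh ih ≤ (b ih).natTrailingDegree :=
      le_natTrailingDegree hbi fun j hj => by
        rw [hb_def, Pi.sub_apply, Pi.smul_apply, smul_eq_mul, coeff_sub,
          coeff_statePoly_of_lt x ih hj, coeff_X_pow_mul', if_neg (by omega), sub_zero]
    have := hGh.natDegree_add_rowDeg_lt hb_high hbi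
    have := natTrailingDegree_le_natDegree (b ih)
    have := hL ih
    omega
  funext ⟨ih, v⟩
  have hv := v.isLt
  have hcoeff := congrArg (coeff · (L - 1 - v)) (congrFun hb ih)
  simp only [b, Pi.sub_apply, Pi.smul_apply, smul_eq_mul, coeff_sub, coeff_X_pow_mul',
    coeff_statePoly_sub_one_sub x (hL ih), Pi.zero_apply, coeff_zero] at hcoeff
  rw [if_neg (by have := hL ih; omega), sub_zero] at hcoeff
  exact hcoeff

end ConvCode

open ConvCode Matrix in
theorem statement16_general {F : Type} [Field F]
    (k kb n : ℕ) (hkn : k + kb = n)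
    (G : Matrix (Fin k) (Fin n) (Polynomial F)) (hG : ConvCode.IsMinimalEncoder F G)
    (Gh : Matrix (Fin kb) (Fin n) (Polynomial F)) (hGh : ConvCode.IsMinimalEncoder F Gh)
    (hdual : ConvCode.code F Gh = ConvCode.dualCode F (ConvCode.code F G))
    (P : Matrix (ConvCode.States F Gh) (ConvCode.States F G) F)
    (hP : P = ConvCode.matC F Gh * (ConvCode.Sm F G 0)ᵀ -
      ConvCode.Nm F G Gh * ConvCode.matA F G) :
    ∃ Pinv : Matrix (ConvCode.States F G) (ConvCode.States F Gh) F,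
      P * Pinv = 1 ∧ Pinv * P = 1 := by
  have horth : Gh * Gᵀ = 0 := mul_transpose_eq_zero_of_code_eq_dualCode hdual
  rw [matC_mul_Sm_zero_transpose_sub_Nm_mul_matA horth] at hP
  refine exists_mul_eq_one_and_mul_eq_one P (fun x hx => ?_) (fun y hy => ?_)
  · rw [hP] at hx
    exact eq_zero_of_vecMul_tailMat_eq_zero hGh horth
      (fun w => mem_code_of_mulVec_eq_zero hdual) hx
  · have hPt : (tailMat Gh G)ᵀ = -P := by rw [hP, tailMat_eq_neg_transpose horth, neg_neg]
    refine eq_zero_of_vecMul_tailMat_eq_zero hG (mul_transpose_eq_zero_comm horth)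
      (fun w => mem_code_of_mulVec_eq_zero_of_isBasic hkn hG.1 hGh.1 horth) ?_
    rw [← mulVec_transpose, hPt, neg_mulVec, hy, neg_zero]

/-- Theorem 4.8: the matrix `P = Ĉ S₀ᵀ − N A` is in `GL_δ(F)`. -/
theorem statement16 {F : Type} [Field F] [Fintype F]
    (k kb n : ℕ) (hkn : k + kb = n)
    (G : Matrix (Fin k) (Fin n) (Polynomial F)) (hG : ConvCode.IsMinimalEncoder F G)
    (Gh : Matrix (Fin kb) (Fin n) (Polynomial F)) (hGh : ConvCode.IsMinimalEncoder F Gh)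
    (hdual : ConvCode.code F Gh = ConvCode.dualCode F (ConvCode.code F G))
    (P : Matrix (ConvCode.States F Gh) (ConvCode.States F G) F)
    (hP : P = ConvCode.matC F Gh * (ConvCode.Sm F G 0)ᵀ -
      ConvCode.Nm F G Gh * ConvCode.matA F G) :
    ∃ Pinv : Matrix (ConvCode.States F G) (ConvCode.States F Gh) F,
      P * Pinv = 1 ∧ Pinv * P = 1 :=
  statement16_general k kb n hkn G hG Gh hGh hdual P hP
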